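/- arXiv:1705.03969 — 2 statements merged into one kernel-verified Lean document; each statement's English description precedes it below -/
import Mathlib

section
/- Let 0 < α < 1, λ ≥ 0, a > 0, and let f : [0,a] × ℝ → ℝ be continuous, bounded, and Lipschitz in the second variable with constant L satisfying L < Γ(α+1)/(2 a^α e^{λa}). Then for all y, z ∈ Ω_γ, the operator A defined by (A y)(t) = y_a e^{-λt} − (1/Γ(α)) ∫₀ᵃ e^{-λ(t-s)} (a−s)^{α−1} f(s,y(s)) ds + (1/Γ(α)) ∫₀ᵗ e^{-λ(t-s)} (t−s)^{α−1} f(s,y(s)) ds satisfies sup_{t∈[0,a]} |(Ay)(t) − (Az)(t)| ≤ (2 L a^α e^{λa}/Γ(1+α)) · sup_{t∈[0,a]} |y(t) − z(t)|, and in particular A is a contraction on Ω_γ. -/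
/-!
The terms of `A y - A z` that do not cancel are two tempered fractional integrals of
`g s = f s (y s) - f s (z s)`, one up to `t` and one up to `a`. Since `|g| ≤ L ‖y - z‖∞`,
`e^{-λ(t-s)} ≤ e^{λa}` and `∫₀ᵇ (b - s)^(α-1) ds = b^α / α ≤ a^α / α`, each of them is at most
`e^{λa} L ‖y - z‖∞ a^α / α`, and `α Γ(α) = Γ(1 + α)` gives the contraction factor.
-/

open Real Set

/-- The shooting operator A for the tempered terminal value problem. -/
noncomputable def shootOp (α lam a ya : ℝ) (f : ℝ → ℝ → ℝ) (y : ℝ → ℝ) (t : ℝ) : ℝ :=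
  ya * Real.exp (-lam * t) -
    (1 / Real.Gamma α) *
      (∫ s in (0 : ℝ)..a, Real.exp (-lam * (t - s)) * (a - s) ^ (α - 1) * f s (y s)) +
    (1 / Real.Gamma α) *
      ∫ s in (0 : ℝ)..t, Real.exp (-lam * (t - s)) * (t - s) ^ (α - 1) * f s (y s)

noncomputable def temperedIntegral (α lam t b : ℝ) (h : ℝ → ℝ) : ℝ :=
  ∫ s in (0 : ℝ)..b, exp (-lam * (t - s)) * (b - s) ^ (α - 1) * h s

lemma shootOp_eq (α lam a ya : ℝ) (f : ℝ → ℝ → ℝ) (y : ℝ → ℝ) (t : ℝ) :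
    shootOp α lam a ya f y t = ya * exp (-lam * t)
      - (1 / Gamma α) * temperedIntegral α lam t a (fun s => f s (y s))
      + (1 / Gamma α) * temperedIntegral α lam t t (fun s => f s (y s)) :=
  rfl

section Kernel

variable {α : ℝ} (hα : 0 < α)
include hα

lemma intervalIntegrable_sub_rpow (b : ℝ) :
    IntervalIntegrable (fun s => (b - s) ^ (α - 1)) MeasureTheory.volume 0 b := by
  simpa using ((intervalIntegral.intervalIntegrable_rpow' (r := α - 1) (a := 0) (b := b)
    (by linarith)).comp_sub_left b).symm

lemma integral_sub_rpow (b : ℝ) : ∫ s in (0 : ℝ)..b, (b - s) ^ (α - 1) = b ^ α / α := by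
  rw [intervalIntegral.integral_comp_sub_left (fun x => x ^ (α - 1)), sub_self, sub_zero,
    integral_rpow (Or.inl (by linarith)), sub_add_cancel, zero_rpow hα.ne', sub_zero]

lemma intervalIntegrable_temperedIntegrand (lam t : ℝ) {b : ℝ} (hb : 0 ≤ b) {h : ℝ → ℝ}
    (hh : ContinuousOn h (Icc 0 b)) :
    IntervalIntegrable (fun s => exp (-lam * (t - s)) * (b - s) ^ (α - 1) * h s)
      MeasureTheory.volume 0 b := by
  have hcont : ContinuousOn (fun s => exp (-lam * (t - s)) * h s) (uIcc 0 b) := by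
    rw [uIcc_of_le hb]
    exact (continuous_exp.comp (by fun_prop)).continuousOn.mul hh
  simpa only [mul_comm, mul_left_comm] using
    (intervalIntegrable_sub_rpow hα b).mul_continuousOn hcont

lemma temperedIntegral_sub (lam t : ℝ) {b : ℝ} (hb : 0 ≤ b) {h₁ h₂ : ℝ → ℝ}
    (hh₁ : ContinuousOn h₁ (Icc 0 b)) (hh₂ : ContinuousOn h₂ (Icc 0 b)) :
    temperedIntegral α lam t b h₁ - temperedIntegral α lam t b h₂ =
      temperedIntegral α lam t b (h₁ - h₂) := by
  rw [temperedIntegral, temperedIntegral, temperedIntegral, ← intervalIntegral.integral_sub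
    (intervalIntegrable_temperedIntegrand hα lam t hb hh₁)
    (intervalIntegrable_temperedIntegrand hα lam t hb hh₂)]
  simp only [Pi.sub_apply, mul_sub]

lemma abs_temperedIntegral_le {lam t b C : ℝ} (hlam : 0 ≤ lam) (ht : 0 ≤ t) (hb : 0 ≤ b)
    {h : ℝ → ℝ} (hC : ∀ s ∈ Ioc 0 b, |h s| ≤ C) :
    |temperedIntegral α lam t b h| ≤ exp (lam * b) * C * (b ^ α / α) := by
  have hpointwise : ∀ s ∈ Ioc 0 b,
      ‖exp (-lam * (t - s)) * (b - s) ^ (α - 1) * h s‖ ≤ exp (lam * b) * C * (b - s) ^ (α - 1) := by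
    intro s hs
    have hexp : exp (-lam * (t - s)) ≤ exp (lam * b) := exp_le_exp.2 (by nlinarith [hs.2])
    have hkernel : 0 ≤ (b - s) ^ (α - 1) := rpow_nonneg (by linarith [hs.2]) _
    calc ‖exp (-lam * (t - s)) * (b - s) ^ (α - 1) * h s‖
        = exp (-lam * (t - s)) * (b - s) ^ (α - 1) * |h s| := by
          rw [norm_mul, norm_mul, norm_of_nonneg (exp_pos _).le, norm_of_nonneg hkernel,
            Real.norm_eq_abs]
      _ ≤ exp (lam * b) * (b - s) ^ (α - 1) * C := by gcongr; exact hC s hs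
      _ = exp (lam * b) * C * (b - s) ^ (α - 1) := by ring
  have := intervalIntegral.norm_integral_le_of_norm_le hb
    (MeasureTheory.ae_of_all _ hpointwise) ((intervalIntegrable_sub_rpow hα b).const_mul _)
  rwa [intervalIntegral.integral_const_mul, integral_sub_rpow hα] at this

end Kernel

lemma abs_shootOp_sub_le {α lam a ya C : ℝ} (hα : 0 < α) (hlam : 0 ≤ lam) {f : ℝ → ℝ → ℝ}
    (hf : Continuous fun p : ℝ × ℝ => f p.1 p.2) {y z : ℝ → ℝ} (hy : ContinuousOn y (Icc 0 a))
    (hz : ContinuousOn z (Icc 0 a)) (hC : ∀ s ∈ Icc 0 a, |f s (y s) - f s (z s)| ≤ C)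
    {t : ℝ} (ht : t ∈ Icc 0 a) :
    |shootOp α lam a ya f y t - shootOp α lam a ya f z t| ≤
      2 * C * a ^ α * exp (lam * a) / Gamma (1 + α) := by
  set g : ℝ → ℝ := fun s => f s (y s) - f s (z s)
  have ha : 0 ≤ a := ht.1.trans ht.2
  have hC0 : 0 ≤ C := (abs_nonneg _).trans (hC t ht)
  have hcomp : ∀ w : ℝ → ℝ, ContinuousOn w (Icc 0 a) →
      ContinuousOn (fun s => f s (w s)) (Icc 0 a) :=
    fun w hw => hf.comp_continuousOn (continuousOn_id.prodMk hw)
  have hdiff : ∀ b ∈ Icc 0 a, temperedIntegral α lam t b (fun s => f s (y s)) -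
      temperedIntegral α lam t b (fun s => f s (z s)) = temperedIntegral α lam t b g :=
    fun b hb => temperedIntegral_sub hα lam t hb.1
      ((hcomp y hy).mono (Icc_subset_Icc le_rfl hb.2))
      ((hcomp z hz).mono (Icc_subset_Icc le_rfl hb.2))
  have hbound : ∀ b ∈ Icc 0 a, |temperedIntegral α lam t b g| ≤ exp (lam * a) * C * (a ^ α / α) :=
    fun b ⟨hb0, hba⟩ => calc
      _ ≤ exp (lam * b) * C * (b ^ α / α) :=
        abs_temperedIntegral_le hα hlam ht.1 hb0 fun s hs => hC s ⟨hs.1.le, hs.2.trans hba⟩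
      _ ≤ exp (lam * a) * C * (a ^ α / α) := by
        have : 0 ≤ b ^ α := rpow_nonneg hb0 α
        gcongr
  have hΓ : 0 < Gamma α := Gamma_pos_of_pos hα
  calc |shootOp α lam a ya f y t - shootOp α lam a ya f z t|
      = (1 / Gamma α) * |temperedIntegral α lam t t g - temperedIntegral α lam t a g| := by
        rw [shootOp_eq, shootOp_eq, ← hdiff t ht, ← hdiff a ⟨ha, le_rfl⟩, ← abs_of_pos
          (one_div_pos.2 hΓ), ← abs_mul, abs_of_pos (one_div_pos.2 hΓ)]
        ring_nf
    _ ≤ (1 / Gamma α) * (exp (lam * a) * C * (a ^ α / α) + exp (lam * a) * C * (a ^ α / α)) := by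
        gcongr
        exact (abs_sub _ _).trans (add_le_add (hbound t ht) (hbound a ⟨ha, le_rfl⟩))
    _ = 2 * C * a ^ α * exp (lam * a) / Gamma (1 + α) := by
        rw [add_comm 1 α, Gamma_add_one hα.ne']
        field_simp
        ring

lemma contraction_factor_lt_one {α lam a L : ℝ} (hα : 0 < α) (ha : 0 < a)
    (hL : L < Gamma (α + 1) / (2 * a ^ α * exp (lam * a))) :
    2 * L * a ^ α * exp (lam * a) / Gamma (1 + α) < 1 := by
  rw [lt_div_iff₀ (by positivity)] at hL
  rw [div_lt_one (Gamma_pos_of_pos (by linarith)), add_comm]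
  linarith

theorem shootOp_contraction_general
    (α lam a ya L : ℝ) (hα0 : 0 < α) (hlam : 0 ≤ lam) (ha : 0 < a)
    (f : ℝ → ℝ → ℝ) (hf : Continuous fun p : ℝ × ℝ => f p.1 p.2)
    (hL : ∀ t ∈ Set.Icc (0 : ℝ) a, ∀ u v : ℝ, |f t u - f t v| ≤ L * |u - v|)
    (hLsmall : L < Real.Gamma (α + 1) / (2 * a ^ α * Real.exp (lam * a)))
    (y z : ℝ → ℝ) (hy : ContinuousOn y (Set.Icc 0 a)) (hz : ContinuousOn z (Set.Icc 0 a)) :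
    (∀ t ∈ Set.Icc (0 : ℝ) a,
        |shootOp α lam a ya f y t - shootOp α lam a ya f z t| ≤
          (2 * L * a ^ α * Real.exp (lam * a) / Real.Gamma (1 + α)) *
            sSup ((fun s => |y s - z s|) '' Set.Icc (0 : ℝ) a)) ∧
      2 * L * a ^ α * Real.exp (lam * a) / Real.Gamma (1 + α) < 1 := by
  set S := sSup ((fun s => |y s - z s|) '' Icc (0 : ℝ) a)
  have hS : ∀ s ∈ Icc 0 a, |y s - z s| ≤ S := fun s hs =>
    le_csSup (isCompact_Icc.image_of_continuousOn (hy.sub hz).abs).bddAbove ⟨s, hs, rfl⟩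
  have hL0 : 0 ≤ L := by
    simpa using (abs_nonneg _).trans (hL 0 ⟨le_rfl, ha.le⟩ 1 0)
  refine ⟨fun t ht => ?_, contraction_factor_lt_one hα0 ha hLsmall⟩
  have hLS : ∀ s ∈ Icc 0 a, |f s (y s) - f s (z s)| ≤ L * S := fun s hs =>
    (hL s hs _ _).trans (mul_le_mul_of_nonneg_left (hS s hs) hL0)
  calc _ ≤ 2 * (L * S) * a ^ α * exp (lam * a) / Gamma (1 + α) :=
        abs_shootOp_sub_le hα0 hlam hf hy hz hLS ht
    _ = _ := by ring

/-- A is a contraction on Ω_γ with contraction factor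
2 L a^α e^{λa}/Γ(1+α) < 1. -/
theorem shootOp_contraction
    (α lam a ya M L : ℝ) (hα0 : 0 < α) (hα1 : α < 1) (hlam : 0 ≤ lam) (ha : 0 < a)
    (f : ℝ → ℝ → ℝ) (hf : Continuous fun p : ℝ × ℝ => f p.1 p.2)
    (hM : ∀ t ∈ Set.Icc (0 : ℝ) a, ∀ u : ℝ, |f t u| ≤ M)
    (hL : ∀ t ∈ Set.Icc (0 : ℝ) a, ∀ u v : ℝ, |f t u - f t v| ≤ L * |u - v|)
    (hLsmall : L < Real.Gamma (α + 1) / (2 * a ^ α * Real.exp (lam * a)))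
    (y z : ℝ → ℝ) (hy : ContinuousOn y (Set.Icc 0 a)) (hz : ContinuousOn z (Set.Icc 0 a))
    (hyγ : ∀ t ∈ Set.Icc (0 : ℝ) a,
      |y t - ya * Real.exp (-lam * t)| ≤ 2 * a ^ α * M * Real.exp (lam * a) / Real.Gamma (1 + α))
    (hzγ : ∀ t ∈ Set.Icc (0 : ℝ) a,
      |z t - ya * Real.exp (-lam * t)| ≤ 2 * a ^ α * M * Real.exp (lam * a) / Real.Gamma (1 + α)) :
    (∀ t ∈ Set.Icc (0 : ℝ) a,
        |shootOp α lam a ya f y t - shootOp α lam a ya f z t| ≤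
          (2 * L * a ^ α * Real.exp (lam * a) / Real.Gamma (1 + α)) *
            sSup ((fun s => |y s - z s|) '' Set.Icc (0 : ℝ) a)) ∧
      2 * L * a ^ α * Real.exp (lam * a) / Real.Gamma (1 + α) < 1 :=
  shootOp_contraction_general α lam a ya L hα0 hlam ha f hf hL hLsmall y z hy hz
end

section
/- Let 0 < α < 1, λ ≥ 0, a > 0, f continuous and Lipschitz with constant L < Γ(α+1)/(2 a^α e^{λa}) in its second argument, and let y, z be the unique continuous solutions of the terminal-value integral equations with terminal values y_a and z_a respectively, i.e., y(t) = y_a e^{-λt} − (e^{-λt}/Γ(α))[∫₀ᵃ e^{λs}(a−s)^{α−1} f(s,y(s)) ds − ∫₀ᵗ e^{λs}(t−s)^{α−1} f(s,y(s)) ds] and similarly for z with z_a. Then sup_{t∈[0,a]} |y(t) − z(t)| ≤ |y_a − z_a| / β, where β = 1 − 2 L e^{λa} a^α / Γ(α+1) > 0. -/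
/-!
Let `M` be the maximum of `|y - z|` on `[0, a]`. Since `f` is `L`-Lipschitz and
`e^{λs} ≤ e^{λa}`, each of the two Riemann–Liouville integrals in the equations for `y` and `z`
differs by at most `L M e^{λa} a^α / α`, using `∫₀ᵗ (t - s)^{α-1} ds = t^α / α`. As
`e^{-λt} ≤ 1` and `α Γ(α) = Γ(α + 1)`, this gives `|y t - z t| ≤ |y_a - z_a| + c M` with
`c = 2 L e^{λa} a^α / Γ(α + 1) < 1`; at the maximum point this reads `M ≤ |y_a - z_a| + c M`.
-/

open Real Set MeasureTheory intervalIntegral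

theorem integral_sub_rpow_sub_one {α : ℝ} (hα : 0 < α) (t : ℝ) :
    ∫ s in (0 : ℝ)..t, (t - s) ^ (α - 1) = t ^ α / α := by
  rw [integral_comp_sub_left (fun x => x ^ (α - 1)) t, sub_self, sub_zero,
    integral_rpow (Or.inl (by linarith)), sub_add_cancel, zero_rpow hα.ne', sub_zero]

theorem intervalIntegrable_sub_rpow_s7 {r : ℝ} (hr : -1 < r) (a t : ℝ) :
    IntervalIntegrable (fun s => (t - s) ^ r) volume a t := by
  simpa using ((intervalIntegrable_rpow' (a := t - a) (b := 0) hr).comp_sub_left t)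

theorem abs_integral_sub_rpow_mul_le {α t K : ℝ} {g : ℝ → ℝ} (hα : 0 < α) (ht : 0 ≤ t)
    (hg : ∀ s ∈ Ioc 0 t, |g s| ≤ K) :
    |∫ s in (0 : ℝ)..t, (t - s) ^ (α - 1) * g s| ≤ K * t ^ α / α := by
  have hbound : ∀ s ∈ Ioc 0 t, ‖(t - s) ^ (α - 1) * g s‖ ≤ K * (t - s) ^ (α - 1) := by
    intro s hs
    have hts : 0 ≤ (t - s) ^ (α - 1) := rpow_nonneg (by linarith [hs.2]) _
    rw [norm_mul, norm_of_nonneg hts, mul_comm K]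
    exact mul_le_mul_of_nonneg_left (hg s hs) hts
  calc |∫ s in (0 : ℝ)..t, (t - s) ^ (α - 1) * g s|
      ≤ ∫ s in (0 : ℝ)..t, K * (t - s) ^ (α - 1) :=
        norm_integral_le_of_norm_le ht (ae_of_all _ hbound)
          ((intervalIntegrable_sub_rpow_s7 (by linarith) 0 t).const_mul K)
    _ = K * t ^ α / α := by
        rw [intervalIntegral.integral_const_mul, integral_sub_rpow_sub_one hα, mul_div_assoc]

/-- Up to the factor `1 / Γ(α)`, the Riemann–Liouville integral of order `α` of
`s ↦ e^{λs} f(s, w(s))` on `[0, t]`. -/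
noncomputable def expRLIntegral (α lam : ℝ) (f : ℝ → ℝ → ℝ) (w : ℝ → ℝ) (t : ℝ) : ℝ :=
  ∫ s in (0 : ℝ)..t, exp (lam * s) * (t - s) ^ (α - 1) * f s (w s)

section ExpRLIntegral

variable {α lam a L M t : ℝ} {f : ℝ → ℝ → ℝ} {y z : ℝ → ℝ}

theorem intervalIntegrable_expRLIntegrand (hα : 0 < α)
    (hf : Continuous fun p : ℝ × ℝ => f p.1 p.2) (hy : ContinuousOn y (uIcc 0 t)) :
    IntervalIntegrable (fun s => exp (lam * s) * (t - s) ^ (α - 1) * f s (y s)) volume 0 t := by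
  have hcont : ContinuousOn (fun s => exp (lam * s) * f s (y s)) (uIcc 0 t) :=
    (continuous_exp.comp (continuous_const_mul lam)).continuousOn.mul
      (hf.comp_continuousOn (continuousOn_id.prodMk hy))
  refine ((intervalIntegrable_sub_rpow_s7 (r := α - 1) (by linarith) 0 t).mul_continuousOn
    hcont).congr fun s _ => ?_
  ring

theorem abs_expRLIntegral_sub_le (hα : 0 < α) (hlam : 0 ≤ lam) (hL0 : 0 ≤ L)
    (hf : Continuous fun p : ℝ × ℝ => f p.1 p.2)
    (hL : ∀ t ∈ Icc (0 : ℝ) a, ∀ u v : ℝ, |f t u - f t v| ≤ L * |u - v|)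
    (hy : ContinuousOn y (Icc 0 a)) (hz : ContinuousOn z (Icc 0 a))
    (hM : ∀ s ∈ Icc (0 : ℝ) a, |y s - z s| ≤ M) (ht : t ∈ Icc 0 a) :
    |expRLIntegral α lam f y t - expRLIntegral α lam f z t| ≤
      L * M * exp (lam * a) * a ^ α / α := by
  have hsub : uIcc 0 t ⊆ Icc 0 a := by
    rw [uIcc_of_le ht.1]
    exact Icc_subset_Icc le_rfl ht.2
  have hdiff : expRLIntegral α lam f y t - expRLIntegral α lam f z t =
      ∫ s in (0 : ℝ)..t, (t - s) ^ (α - 1) * (exp (lam * s) * (f s (y s) - f s (z s))) := by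
    rw [expRLIntegral, expRLIntegral, ← integral_sub
      (intervalIntegrable_expRLIntegrand hα hf (hy.mono hsub))
      (intervalIntegrable_expRLIntegrand hα hf (hz.mono hsub))]
    congr 1
    ext s
    ring
  have hintegrand : ∀ s ∈ Ioc 0 t,
      |exp (lam * s) * (f s (y s) - f s (z s))| ≤ exp (lam * a) * (L * M) := by
    intro s hs
    have hs' : s ∈ Icc 0 a := ⟨hs.1.le, hs.2.trans ht.2⟩
    rw [abs_mul, abs_of_pos (exp_pos _)]
    exact mul_le_mul (exp_le_exp.mpr (mul_le_mul_of_nonneg_left hs'.2 hlam))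
      ((hL s hs' _ _).trans (mul_le_mul_of_nonneg_left (hM s hs') hL0)) (abs_nonneg _)
      (exp_pos _).le
  have hM0 : 0 ≤ M := (abs_nonneg _).trans (hM 0 ⟨le_rfl, ht.1.trans ht.2⟩)
  calc |expRLIntegral α lam f y t - expRLIntegral α lam f z t|
      ≤ exp (lam * a) * (L * M) * t ^ α / α := by
        rw [hdiff]
        exact abs_integral_sub_rpow_mul_le hα ht.1 hintegrand
    _ ≤ exp (lam * a) * (L * M) * a ^ α / α := by
        gcongr
        exacts [ht.1, ht.2]
    _ = L * M * exp (lam * a) * a ^ α / α := by ring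

theorem abs_sub_le_abs_terminal_sub_add (hα : 0 < α) (hlam : 0 ≤ lam) (hL0 : 0 ≤ L)
    (hf : Continuous fun p : ℝ × ℝ => f p.1 p.2)
    (hL : ∀ t ∈ Icc (0 : ℝ) a, ∀ u v : ℝ, |f t u - f t v| ≤ L * |u - v|)
    {ya za : ℝ} (hy : ContinuousOn y (Icc 0 a)) (hz : ContinuousOn z (Icc 0 a))
    (hyeq : ∀ t ∈ Icc (0 : ℝ) a, y t = ya * exp (-lam * t) -
      exp (-lam * t) / Gamma α * (expRLIntegral α lam f y a - expRLIntegral α lam f y t))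
    (hzeq : ∀ t ∈ Icc (0 : ℝ) a, z t = za * exp (-lam * t) -
      exp (-lam * t) / Gamma α * (expRLIntegral α lam f z a - expRLIntegral α lam f z t))
    (hM : ∀ s ∈ Icc (0 : ℝ) a, |y s - z s| ≤ M) (ht : t ∈ Icc 0 a) :
    |y t - z t| ≤ |ya - za| + 2 * L * exp (lam * a) * a ^ α / Gamma (α + 1) * M := by
  set D := L * M * exp (lam * a) * a ^ α / α with hD_def
  have hD : 0 ≤ D := by
    have hM0 : 0 ≤ M := (abs_nonneg _).trans (hM t ht)
    have ha : 0 ≤ a := ht.1.trans ht.2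
    positivity
  have hΓ : 0 < Gamma α := Gamma_pos_of_pos hα
  have he : exp (-lam * t) ≤ 1 := exp_le_one_iff.mpr (by nlinarith [ht.1])
  have hdiff : y t - z t = (ya - za) * exp (-lam * t) - exp (-lam * t) / Gamma α *
      ((expRLIntegral α lam f y a - expRLIntegral α lam f z a) -
        (expRLIntegral α lam f y t - expRLIntegral α lam f z t)) := by
    rw [hyeq t ht, hzeq t ht]
    ring
  have hIa := abs_expRLIntegral_sub_le hα hlam hL0 hf hL hy hz hM
    (right_mem_Icc.mpr (ht.1.trans ht.2))
  have hIt := abs_expRLIntegral_sub_le hα hlam hL0 hf hL hy hz hM ht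
  calc |y t - z t| ≤ |ya - za| * exp (-lam * t) + exp (-lam * t) / Gamma α * (D + D) := by
        have he0 := exp_pos (-lam * t)
        rw [hdiff]
        refine (abs_sub _ _).trans (add_le_add ?_ ?_)
        · rw [abs_mul, abs_of_pos he0]
        · rw [abs_mul, abs_div, abs_of_pos he0, abs_of_pos hΓ]
          gcongr
          exact (abs_sub _ _).trans (add_le_add hIa hIt)
    _ ≤ |ya - za| * 1 + 1 / Gamma α * (D + D) := by gcongr
    _ = |ya - za| + 2 * L * exp (lam * a) * a ^ α / Gamma (α + 1) * M := by
        rw [Gamma_add_one hα.ne', hD_def]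
        field_simp
        ring

end ExpRLIntegral

theorem continuous_dependence_terminal_value_general
    (α lam a ya za L : ℝ) (hα0 : 0 < α) (hlam : 0 ≤ lam) (ha : 0 < a)
    (f : ℝ → ℝ → ℝ) (hf : Continuous fun p : ℝ × ℝ => f p.1 p.2)
    (hL : ∀ t ∈ Set.Icc (0 : ℝ) a, ∀ u v : ℝ, |f t u - f t v| ≤ L * |u - v|)
    (hLsmall : L < Real.Gamma (α + 1) / (2 * a ^ α * Real.exp (lam * a)))
    (y z : ℝ → ℝ) (hy : ContinuousOn y (Set.Icc 0 a)) (hz : ContinuousOn z (Set.Icc 0 a))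
    (hyeq : ∀ t ∈ Set.Icc (0 : ℝ) a,
      y t = ya * Real.exp (-lam * t) -
        (Real.exp (-lam * t) / Real.Gamma α) *
          ((∫ s in (0 : ℝ)..a, Real.exp (lam * s) * (a - s) ^ (α - 1) * f s (y s)) -
            ∫ s in (0 : ℝ)..t, Real.exp (lam * s) * (t - s) ^ (α - 1) * f s (y s)))
    (hzeq : ∀ t ∈ Set.Icc (0 : ℝ) a,
      z t = za * Real.exp (-lam * t) -
        (Real.exp (-lam * t) / Real.Gamma α) *
          ((∫ s in (0 : ℝ)..a, Real.exp (lam * s) * (a - s) ^ (α - 1) * f s (z s)) -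
            ∫ s in (0 : ℝ)..t, Real.exp (lam * s) * (t - s) ^ (α - 1) * f s (z s))) :
    0 < 1 - 2 * L * Real.exp (lam * a) * a ^ α / Real.Gamma (α + 1) ∧
      ∀ t ∈ Set.Icc (0 : ℝ) a,
        |y t - z t| ≤ |ya - za| / (1 - 2 * L * Real.exp (lam * a) * a ^ α / Real.Gamma (α + 1)) := by
  have hL0 : 0 ≤ L := (abs_nonneg _).trans (by simpa using hL 0 ⟨le_rfl, ha.le⟩ 0 1)
  set c := 2 * L * Real.exp (lam * a) * a ^ α / Real.Gamma (α + 1)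
  have hβ : 0 < 1 - c := by
    have hΓ : 0 < Gamma (α + 1) := Gamma_pos_of_pos (by linarith)
    rw [lt_div_iff₀ (by positivity)] at hLsmall
    rw [sub_pos, div_lt_one hΓ]
    linarith
  refine ⟨hβ, fun t ht => ?_⟩
  obtain ⟨t₀, ht₀, hmax⟩ :=
    isCompact_Icc.exists_isMaxOn (nonempty_Icc.mpr ha.le) (hy.sub hz).abs
  have hM : ∀ s ∈ Icc 0 a, |y s - z s| ≤ |y t₀ - z t₀| := fun s hs => hmax hs
  have hself := abs_sub_le_abs_terminal_sub_add hα0 hlam hL0 hf hL hy hz hyeq hzeq hM ht₀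
  rw [le_div_iff₀ hβ]
  calc |y t - z t| * (1 - c) ≤ |y t₀ - z t₀| * (1 - c) :=
        mul_le_mul_of_nonneg_right (hM t ht) hβ.le
    _ ≤ |ya - za| := by linarith

/-- continuous dependence of the solution on the terminal value. -/
theorem continuous_dependence_terminal_value
    (α lam a ya za L : ℝ) (hα0 : 0 < α) (hα1 : α < 1) (hlam : 0 ≤ lam) (ha : 0 < a)
    (f : ℝ → ℝ → ℝ) (hf : Continuous fun p : ℝ × ℝ => f p.1 p.2)
    (hL : ∀ t ∈ Set.Icc (0 : ℝ) a, ∀ u v : ℝ, |f t u - f t v| ≤ L * |u - v|)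
    (hLsmall : L < Real.Gamma (α + 1) / (2 * a ^ α * Real.exp (lam * a)))
    (y z : ℝ → ℝ) (hy : ContinuousOn y (Set.Icc 0 a)) (hz : ContinuousOn z (Set.Icc 0 a))
    (hyeq : ∀ t ∈ Set.Icc (0 : ℝ) a,
      y t = ya * Real.exp (-lam * t) -
        (Real.exp (-lam * t) / Real.Gamma α) *
          ((∫ s in (0 : ℝ)..a, Real.exp (lam * s) * (a - s) ^ (α - 1) * f s (y s)) -
            ∫ s in (0 : ℝ)..t, Real.exp (lam * s) * (t - s) ^ (α - 1) * f s (y s)))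
    (hzeq : ∀ t ∈ Set.Icc (0 : ℝ) a,
      z t = za * Real.exp (-lam * t) -
        (Real.exp (-lam * t) / Real.Gamma α) *
          ((∫ s in (0 : ℝ)..a, Real.exp (lam * s) * (a - s) ^ (α - 1) * f s (z s)) -
            ∫ s in (0 : ℝ)..t, Real.exp (lam * s) * (t - s) ^ (α - 1) * f s (z s))) :
    0 < 1 - 2 * L * Real.exp (lam * a) * a ^ α / Real.Gamma (α + 1) ∧
      ∀ t ∈ Set.Icc (0 : ℝ) a,
        |y t - z t| ≤ |ya - za| / (1 - 2 * L * Real.exp (lam * a) * a ^ α / Real.Gamma (α + 1)) :=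
  continuous_dependence_terminal_value_general α lam a ya za L hα0 hlam ha f hf hL hLsmall y z hy hz
    hyeq hzeq
end
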